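/- For every integer p ≥ 1 and every odd integer q ≥ 3, the tour T of the instance I_q (defined below) has length, measured in the p-norm, at least q · q^{(p+1)q}. -/
import Mathlib


open Classical

/-- The `p`-norm distance between two points of `ℝ²`. -/
noncomputable def pdist (p : ℝ) (a b : ℝ × ℝ) : ℝ :=
  (|a.1 - b.1| ^ p + |a.2 - b.2| ^ p) ^ (1 / p)

/-- The `y`-coordinate `S(i) = ∑_{s=0}^{i−1} q^{(p+1)(q−s)−1}` of the `i`-th
layer of the instance `I_q`. -/
noncomputable def layerY (p : ℝ) (q i : ℕ) : ℝ :=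
  ∑ s ∈ Finset.range i, (q : ℝ) ^ ((p + 1) * ((q : ℝ) - (s : ℝ)) - 1)

/-- The quantity `q^{(p+1)q}`. -/
noncomputable def bigM (p : ℝ) (q : ℕ) : ℝ := (q : ℝ) ^ ((p + 1) * (q : ℝ))

/-- The spacing `q^{(p+1)(q−i)}` between consecutive points on layer `i`. -/
noncomputable def spacing (p : ℝ) (q i : ℕ) : ℝ :=
  (q : ℝ) ^ ((p + 1) * ((q : ℝ) - (i : ℝ)))

/-- The number `q^{(p+1)i}` of spacing intervals on layer `i`
(as a natural number). -/
noncomputable def numIntervals (p : ℝ) (q i : ℕ) : ℕ :=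
  Nat.floor ((q : ℝ) ^ ((p + 1) * (i : ℝ)))

/-- The vertical distance `q^{(p+1)(q−i)−1}` between layers `i` and `i+1`
(as a natural number). -/
noncomputable def gapCount (p : ℝ) (q i : ℕ) : ℕ :=
  Nat.floor ((q : ℝ) ^ ((p + 1) * ((q : ℝ) - (i : ℝ)) - 1))

/-- The vertex set `V₁` of the instance `I_q`. -/
noncomputable def V1 (p : ℝ) (q : ℕ) : Finset (ℝ × ℝ) :=
  (Finset.range (q + 1)).biUnion fun i =>
    (Finset.range (numIntervals p q i + 1)).image fun j =>
      ((j : ℝ) * spacing p q i, layerY p q i)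

/-- The vertex set `V₂` of the instance `I_q` (a copy of `V₁` shifted to the
right by `2q^{(p+1)q}`). -/
noncomputable def V2 (p : ℝ) (q : ℕ) : Finset (ℝ × ℝ) :=
  (Finset.range (q + 1)).biUnion fun i =>
    (Finset.range (numIntervals p q i + 1)).image fun j =>
      ((j : ℝ) * spacing p q i + 2 * bigM p q, layerY p q i)

/-- The vertex set `V₃` of the instance `I_q` (the unit-spaced points filling
the gap on the topmost layer). -/
noncomputable def V3 (p : ℝ) (q : ℕ) : Finset (ℝ × ℝ) :=
  (Finset.Icc 1 (Nat.floor (bigM p q) - 1)).image fun j =>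
    (bigM p q + (j : ℝ), layerY p q q)

/-- The vertex set `V₄` of the instance `I_q` (the unit-spaced points on the
vertical segments `h_i` and `h'_i`). -/
noncomputable def V4 (p : ℝ) (q : ℕ) : Finset (ℝ × ℝ) :=
  (Finset.range q).biUnion fun i =>
    (Finset.Icc 1 (gapCount p q i - 1)).biUnion fun j =>
      if Even i then
        {((0 : ℝ), (j : ℝ) + layerY p q i), (3 * bigM p q, (j : ℝ) + layerY p q i)}
      else
        {(bigM p q, (j : ℝ) + layerY p q i), (2 * bigM p q, (j : ℝ) + layerY p q i)}

/-- The vertex set of the instance `I_q`. -/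
noncomputable def VIq (p : ℝ) (q : ℕ) : Finset (ℝ × ℝ) :=
  V1 p q ∪ V2 p q ∪ V3 p q ∪ V4 p q

/-- The length (in the `p`-norm) of an undirected edge of `ℝ²`. -/
noncomputable def edgeLen (p : ℝ) : Sym2 (ℝ × ℝ) → ℝ :=
  Sym2.lift ⟨fun a b => pdist p a b, fun a b => by
    simp only [pdist]
    rw [abs_sub_comm a.1 b.1, abs_sub_comm a.2 b.2]⟩

/-- The edge set `E₁` of the tour `T` of `I_q`: the horizontal edges joining
consecutive points of `V₁` on each layer. -/
noncomputable def E1 (p : ℝ) (q : ℕ) : Finset (Sym2 (ℝ × ℝ)) :=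
  (Finset.range (q + 1)).biUnion fun i =>
    (Finset.range (numIntervals p q i)).image fun j =>
      s(((j : ℝ) * spacing p q i, layerY p q i),
        (((j : ℝ) + 1) * spacing p q i, layerY p q i))

/-- The edge set `E₂` of the tour `T` of `I_q`: the horizontal edges joining
consecutive points of `V₂` on each layer. -/
noncomputable def E2 (p : ℝ) (q : ℕ) : Finset (Sym2 (ℝ × ℝ)) :=
  (Finset.range (q + 1)).biUnion fun i =>
    (Finset.range (numIntervals p q i)).image fun j =>
      s(((j : ℝ) * spacing p q i + 2 * bigM p q, layerY p q i),
        (((j : ℝ) + 1) * spacing p q i + 2 * bigM p q, layerY p q i))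

/-- The edge set `E₃` of the tour `T` of `I_q`: the unit-length horizontal edges
on the topmost layer between `x = q^{(p+1)q}` and `x = 2q^{(p+1)q}`. -/
noncomputable def E3 (p : ℝ) (q : ℕ) : Finset (Sym2 (ℝ × ℝ)) :=
  (Finset.range (Nat.floor (bigM p q))).image fun j =>
    s((bigM p q + (j : ℝ), layerY p q q), (bigM p q + (j : ℝ) + 1, layerY p q q))

/-- The edge set `E₄` of the tour `T` of `I_q`: the unit-length vertical edges
on the segments `h_i` and `h'_i`. -/
noncomputable def E4 (p : ℝ) (q : ℕ) : Finset (Sym2 (ℝ × ℝ)) :=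
  (Finset.range q).biUnion fun i =>
    (Finset.range (gapCount p q i)).biUnion fun j =>
      if Even i then
        { s(((0 : ℝ), (j : ℝ) + layerY p q i), ((0 : ℝ), (j : ℝ) + 1 + layerY p q i)),
          s((3 * bigM p q, (j : ℝ) + layerY p q i),
            (3 * bigM p q, (j : ℝ) + 1 + layerY p q i)) }
      else
        { s((bigM p q, (j : ℝ) + layerY p q i), (bigM p q, (j : ℝ) + 1 + layerY p q i)),
          s((2 * bigM p q, (j : ℝ) + layerY p q i),
            (2 * bigM p q, (j : ℝ) + 1 + layerY p q i)) }

/-- The edge set `E₅` of the tour `T` of `I_q`. -/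
noncomputable def E5 (p : ℝ) (q : ℕ) : Finset (Sym2 (ℝ × ℝ)) :=
  {s((bigM p q, (0 : ℝ)), (2 * bigM p q, (0 : ℝ)))}

/-- The edge set `E(T) = E₁ ∪ E₂ ∪ E₃ ∪ E₄ ∪ E₅` of the tour `T` of the
instance `I_q`. -/
noncomputable def ET (p : ℝ) (q : ℕ) : Finset (Sym2 (ℝ × ℝ)) :=
  E1 p q ∪ E2 p q ∪ E3 p q ∪ E4 p q ∪ E5 p q
lemma edgeLen_nonneg (p : ℝ) (e : Sym2 (ℝ × ℝ)) : 0 ≤ edgeLen p e := by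
  induction e using Sym2.ind with
  | _ a b =>
    simp only [edgeLen, Sym2.lift_mk, pdist]
    have h1 : (0:ℝ) ≤ |a.1 - b.1| ^ p := Real.rpow_nonneg (abs_nonneg _) _
    have h2 : (0:ℝ) ≤ |a.2 - b.2| ^ p := Real.rpow_nonneg (abs_nonneg _) _
    exact Real.rpow_nonneg (by linarith) _

lemma layerY_strictMono (p : ℝ) (q : ℕ) (hq : 0 < q) : StrictMono (layerY p q) := by
  apply strictMono_nat_of_lt_succ
  intro n
  have hpos : (0:ℝ) < (q:ℝ) ^ ((p + 1) * ((q:ℝ) - (n:ℝ)) - 1) :=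
    Real.rpow_pos_of_pos (by exact_mod_cast hq) _
  simp only [layerY, Finset.sum_range_succ]
  linarith

lemma edgeLen_horiz (p : ℝ) (hp0 : p ≠ 0) (x y d : ℝ) (hd : 0 ≤ d) :
    edgeLen p s((x, y), (x + d, y)) = d := by
  simp only [edgeLen, Sym2.lift_mk, pdist]
  have : |x - (x + d)| = d := by rw [abs_sub_comm]; simp [abs_of_nonneg hd]
  rw [this]
  simp only [sub_self, abs_zero, Real.zero_rpow hp0, add_zero]
  rw [← Real.rpow_mul hd, mul_one_div_cancel hp0, Real.rpow_one]

lemma E1_eq (p : ℝ) (q : ℕ) : E1 p q = (Finset.range (q + 1)).biUnion fun i =>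
    (Finset.range (numIntervals p q i)).image fun (j : ℕ) =>
      s(((j : ℝ) * spacing p q i, layerY p q i),
        (((j : ℝ) + 1) * spacing p q i, layerY p q i)) := by
  ext e
  simp [E1, Finset.mem_biUnion, Finset.mem_image]

lemma sum_E1 (p' : ℕ) (hp' : 1 ≤ p') (p : ℝ) (hp : p = (p' : ℝ)) (q : ℕ) (hq : 3 ≤ q) :
    ∑ e ∈ E1 p q, edgeLen p e = ((q : ℝ) + 1) * bigM p q := by
  have hq0 : (0:ℝ) < (q:ℝ) := by exact_mod_cast (by omega : 0 < q)
  have hp0 : p ≠ 0 := by rw [hp]; exact_mod_cast (by omega : p' ≠ 0)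
  have hN : ∀ i : ℕ, ((numIntervals p q i : ℕ) : ℝ) = (q:ℝ) ^ ((p + 1) * (i:ℝ)) := by
    intro i
    have key : (q:ℝ) ^ ((p + 1) * (i:ℝ)) = ((q ^ ((p' + 1) * i) : ℕ) : ℝ) := by
      rw [Nat.cast_pow, ← Real.rpow_natCast (q:ℝ) ((p' + 1) * i)]
      congr 1
      push_cast [hp]; ring
    rw [numIntervals, key, Nat.floor_natCast]
  have hsp : ∀ i : ℕ, (0:ℝ) < spacing p q i := fun i => Real.rpow_pos_of_pos hq0 _
  have hdisj : ((Finset.range (q + 1) : Finset ℕ) : Set ℕ).Pairwise fun i i' =>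
      Disjoint
        ((Finset.range (numIntervals p q i)).image fun (j : ℕ) =>
          s(((j : ℝ) * spacing p q i, layerY p q i),
            (((j : ℝ) + 1) * spacing p q i, layerY p q i)))
        ((Finset.range (numIntervals p q i')).image fun (j : ℕ) =>
          s(((j : ℝ) * spacing p q i', layerY p q i'),
            (((j : ℝ) + 1) * spacing p q i', layerY p q i'))) := by
    intro i _ i' _ hne
    rw [Finset.disjoint_left]
    rintro e he he'
    simp only [Finset.mem_image, Finset.mem_range] at he he'
    obtain ⟨j, _, rfl⟩ := he
    obtain ⟨j', _, hej⟩ := he'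
    apply hne
    apply (layerY_strictMono p q (by omega)).injective
    rw [Sym2.eq_iff] at hej
    rcases hej with ⟨h1, _⟩ | ⟨h1, _⟩ <;> exact ((Prod.ext_iff.mp h1).2).symm
  rw [E1_eq, Finset.sum_biUnion hdisj]
  have hlayer : ∀ i ∈ Finset.range (q + 1),
      (∑ e ∈ (Finset.range (numIntervals p q i)).image fun (j : ℕ) =>
          s(((j : ℝ) * spacing p q i, layerY p q i),
            (((j : ℝ) + 1) * spacing p q i, layerY p q i)), edgeLen p e) = bigM p q := by
    intro i _
    have hsp' : spacing p q i ≠ 0 := (hsp i).ne'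
    have hinj : ∀ j ∈ Finset.range (numIntervals p q i),
        ∀ j' ∈ Finset.range (numIntervals p q i),
        s(((j : ℝ) * spacing p q i, layerY p q i),
          (((j : ℝ) + 1) * spacing p q i, layerY p q i)) =
        s(((j' : ℝ) * spacing p q i, layerY p q i),
          (((j' : ℝ) + 1) * spacing p q i, layerY p q i)) → j = j' := by
      intro j _ j' _ h
      rw [Sym2.eq_iff] at h
      rcases h with ⟨h1, _⟩ | ⟨h1, h2⟩
      · have := mul_right_cancel₀ hsp' (Prod.ext_iff.mp h1).1
        exact_mod_cast this
      · have e1 : (j:ℝ) = (j':ℝ) + 1 := mul_right_cancel₀ hsp' (Prod.ext_iff.mp h1).1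
        have e2 : (j:ℝ) + 1 = (j':ℝ) := mul_right_cancel₀ hsp' (Prod.ext_iff.mp h2).1
        linarith
    rw [Finset.sum_image hinj]
    have hterm : ∀ j ∈ Finset.range (numIntervals p q i),
        edgeLen p s(((j : ℝ) * spacing p q i, layerY p q i),
          (((j : ℝ) + 1) * spacing p q i, layerY p q i)) = spacing p q i := by
      intro j _
      have : ((j : ℝ) + 1) * spacing p q i = (j : ℝ) * spacing p q i + spacing p q i := by
        ring
      rw [this]
      exact edgeLen_horiz p hp0 _ _ _ (hsp i).le
    rw [Finset.sum_congr rfl hterm, Finset.sum_const, Finset.card_range, nsmul_eq_mul,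
      hN, spacing, ← Real.rpow_add hq0, bigM]
    congr 1; ring
  rw [Finset.sum_congr rfl hlayer, Finset.sum_const, Finset.card_range, nsmul_eq_mul]
  push_cast; ring

/-- For every integer `p' ≥ 1` with `p = p'` and every odd integer `q ≥ 3`, the
tour `T` of the instance `I_q`, measured in the `p`-norm, has length at least
`q · q^{(p+1)q}`. -/
theorem tour_T_length_lower_bound (p' : ℕ) (hp' : 1 ≤ p') (p : ℝ) (hp : p = (p' : ℝ))
    (q : ℕ) (hq : 3 ≤ q) (hodd : Odd q) :
    (q : ℝ) * bigM p q ≤ ∑ e ∈ ET p q, edgeLen p e := by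
  have hq0 : (0:ℝ) < (q:ℝ) := by exact_mod_cast (by omega : 0 < q)
  have hM : (0:ℝ) < bigM p q := Real.rpow_pos_of_pos hq0 _
  have hsub : E1 p q ⊆ ET p q := by
    intro e he
    simp only [ET, Finset.mem_union]
    tauto
  calc (q : ℝ) * bigM p q ≤ ((q : ℝ) + 1) * bigM p q := by nlinarith
    _ = ∑ e ∈ E1 p q, edgeLen p e := (sum_E1 p' hp' p hp q hq).symm
    _ ≤ ∑ e ∈ ET p q, edgeLen p e :=
        Finset.sum_le_sum_of_subset_of_nonneg hsub fun e _ _ => edgeLen_nonneg p e
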